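/- Let (X,A) be a measurable space and K : X × X → ℝ a measurable symmetric strongly negative definite kernel with K(x,x) = 0 for all x. If μ, ν ∈ M_K satisfy N_K(μ,ν) = 0, then μ = ν. -/

import Mathlib

open MeasureTheory Filter Topology

noncomputable section

/-- A symmetric kernel `K` is negative definite if
`Σ_{j,k} a_j a_k K(x_j, x_k) ≤ 0` for all finite families of points and reals. -/
def IsNegDefKernel {α : Type*} (K : α → α → ℝ) : Prop :=
  ∀ (n : ℕ) (x : Fin n → α) (a : Fin n → ℝ),
    ∑ j, ∑ k, a j * a k * K (x j) (x k) ≤ 0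

/-- A kernel is strongly negative definite if it is negative definite and, for every
probability measure `Q` and every `Q`-integrable `h` with `∫ h dQ = 0`,
`∫∫ K(x,y) h(x) h(y) dQ dQ = 0` implies `h = 0` `Q`-a.e. -/
def IsStronglyNegDefKernel {α : Type*} [MeasurableSpace α] (K : α → α → ℝ) : Prop :=
  IsNegDefKernel K ∧
    ∀ Q : Measure α, IsProbabilityMeasure Q →
      ∀ h : α → ℝ, Integrable h Q → (∫ x, h x ∂Q) = 0 →
        (∫ x, (∫ y, K x y * h x * h y ∂Q) ∂Q) = 0 → h =ᵐ[Q] 0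

/-- `N_K(μ,ν) = 2∫∫ K dμ dν − ∫∫ K dμ dμ − ∫∫ K dν dν`. -/
def NK {α : Type*} [MeasurableSpace α] (K : α → α → ℝ) (μ ν : Measure α) : ℝ :=
  2 * (∫ x, (∫ y, K x y ∂ν) ∂μ) - (∫ x, (∫ y, K x y ∂μ) ∂μ)
    - (∫ x, (∫ y, K x y ∂ν) ∂ν)

/-! With `Q = (μ + ν)/2`, both measures have densities with respect to `Q`, and
`h = dμ/dQ - dν/dQ` has `Q`-mean zero. Expanding the bilinear form,
`∫∫ K(x,y) h(x) h(y) dQ dQ = ∫∫ K d(μ - ν) d(μ - ν) = -N_K(μ,ν) = 0`, the two cross terms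
being equal by symmetry of `K`. Strong negative definiteness then forces `h = 0` `Q`-a.e.,
that is, `μ = ν`. -/

open scoped ENNReal

section RnDerivDiff

variable {α : Type*} [MeasurableSpace α] {μ ν Q : Measure α}

def rnDerivDiff (μ ν Q : Measure α) (x : α) : ℝ :=
  (μ.rnDeriv Q x).toReal - (ν.rnDeriv Q x).toReal

lemma integrable_rnDerivDiff [IsFiniteMeasure μ] [IsFiniteMeasure ν] :
    Integrable (rnDerivDiff μ ν Q) Q :=
  Measure.integrable_toReal_rnDeriv.sub Measure.integrable_toReal_rnDeriv

lemma integral_rnDerivDiff [IsFiniteMeasure μ] [IsFiniteMeasure ν] [SigmaFinite Q]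
    (hμ : μ ≪ Q) (hν : ν ≪ Q) :
    ∫ x, rnDerivDiff μ ν Q x ∂Q = μ.real Set.univ - ν.real Set.univ := by
  unfold rnDerivDiff
  rw [integral_sub Measure.integrable_toReal_rnDeriv Measure.integrable_toReal_rnDeriv,
    Measure.integral_toReal_rnDeriv hμ, Measure.integral_toReal_rnDeriv hν]

variable [SigmaFinite μ] [SigmaFinite ν] [SigmaFinite Q]

lemma integral_rnDerivDiff_mul (hμ : μ ≪ Q) (hν : ν ≪ Q) {φ : α → ℝ}
    (hφμ : Integrable φ μ) (hφν : Integrable φ ν) :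
    ∫ x, rnDerivDiff μ ν Q x * φ x ∂Q = ∫ x, φ x ∂μ - ∫ x, φ x ∂ν := by
  have hμφ : Integrable (fun x ↦ (μ.rnDeriv Q x).toReal * φ x) Q :=
    (integrable_rnDeriv_smul_iff hμ).2 hφμ
  have hνφ : Integrable (fun x ↦ (ν.rnDeriv Q x).toReal * φ x) Q :=
    (integrable_rnDeriv_smul_iff hν).2 hφν
  simp only [rnDerivDiff, sub_mul]
  rw [integral_sub hμφ hνφ, integral_toReal_rnDeriv_mul hμ, integral_toReal_rnDeriv_mul hν]

lemma eq_of_rnDerivDiff_ae_eq_zero (hμ : μ ≪ Q) (hν : ν ≪ Q)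
    (h : rnDerivDiff μ ν Q =ᵐ[Q] 0) : μ = ν := by
  have hrn : μ.rnDeriv Q =ᵐ[Q] ν.rnDeriv Q := by
    filter_upwards [h, Measure.rnDeriv_lt_top μ Q, Measure.rnDeriv_lt_top ν Q] with x hx hμx hνx
    exact (ENNReal.toReal_eq_toReal_iff' hμx.ne hνx.ne).1 (sub_eq_zero.1 hx)
  rw [← Measure.withDensity_rnDeriv_eq μ Q hμ, ← Measure.withDensity_rnDeriv_eq ν Q hν,
    withDensity_congr_ae hrn]

end RnDerivDiff

section Kernel

variable {α : Type*} [MeasurableSpace α] {μ ν Q : Measure α} {K : α → α → ℝ}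

lemma integrable_uncurry_prod_comm_of_symm [SFinite μ] [SFinite ν]
    (hK : ∀ x y, K x y = K y x) (h : Integrable (Function.uncurry K) (μ.prod ν)) :
    Integrable (Function.uncurry K) (ν.prod μ) := by
  convert h.swap using 1
  ext z
  exact hK z.1 z.2

lemma integral_integral_comm_of_symm [SFinite μ] [SFinite ν]
    (hK : ∀ x y, K x y = K y x) (h : Integrable (Function.uncurry K) (μ.prod ν)) :
    ∫ x, ∫ y, K x y ∂ν ∂μ = ∫ x, ∫ y, K x y ∂μ ∂ν := by
  rw [integral_integral_swap h]
  exact integral_congr_ae (ae_of_all _ fun y ↦ integral_congr_ae (ae_of_all _ fun x ↦ hK x y))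

variable [SigmaFinite μ] [SigmaFinite ν] [SigmaFinite Q]

lemma integral_integral_mul_rnDerivDiff_mul_rnDerivDiff (hμQ : μ ≪ Q) (hνQ : ν ≪ Q)
    (hQ : Q ≪ μ + ν)
    (hμμ : Integrable (Function.uncurry K) (μ.prod μ))
    (hμν : Integrable (Function.uncurry K) (μ.prod ν))
    (hνμ : Integrable (Function.uncurry K) (ν.prod μ))
    (hνν : Integrable (Function.uncurry K) (ν.prod ν)) :
    ∫ x, ∫ y, K x y * rnDerivDiff μ ν Q x * rnDerivDiff μ ν Q y ∂Q ∂Q =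
      (∫ x, ∫ y, K x y ∂μ ∂μ) - (∫ x, ∫ y, K x y ∂ν ∂μ)
        - ((∫ x, ∫ y, K x y ∂μ ∂ν) - ∫ x, ∫ y, K x y ∂ν ∂ν) := by
  set h := rnDerivDiff μ ν Q
  have hsection : ∀ᵐ x ∂Q, Integrable (K x) μ ∧ Integrable (K x) ν := by
    refine hQ.ae_le (ae_add_measure_iff.2 ⟨?_, ?_⟩)
    · exact hμμ.prod_right_ae.and hμν.prod_right_ae
    · exact hνμ.prod_right_ae.and hνν.prod_right_ae
  have hinner : ∀ᵐ x ∂Q, ∫ y, K x y * h x * h y ∂Q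
      = h x * ((∫ y, K x y ∂μ) - ∫ y, K x y ∂ν) := by
    filter_upwards [hsection] with x ⟨hxμ, hxν⟩
    calc ∫ y, K x y * h x * h y ∂Q = h x * ∫ y, h y * K x y ∂Q := by
          rw [← integral_const_mul]
          congr with y
          ring
      _ = h x * ((∫ y, K x y ∂μ) - ∫ y, K x y ∂ν) := by
          rw [integral_rnDerivDiff_mul hμQ hνQ hxμ hxν]
  have hFμ : Integrable (fun x ↦ (∫ y, K x y ∂μ) - ∫ y, K x y ∂ν) μ :=
    hμμ.integral_prod_left.sub hμν.integral_prod_left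
  have hFν : Integrable (fun x ↦ (∫ y, K x y ∂μ) - ∫ y, K x y ∂ν) ν :=
    hνμ.integral_prod_left.sub hνν.integral_prod_left
  rw [integral_congr_ae hinner, integral_rnDerivDiff_mul hμQ hνQ hFμ hFν]
  congr 1
  · exact integral_sub hμμ.integral_prod_left hμν.integral_prod_left
  · exact integral_sub hνμ.integral_prod_left hνν.integral_prod_left

lemma NK_eq_neg_integral_integral_mul_rnDerivDiff_mul_rnDerivDiff
    (hK : ∀ x y, K x y = K y x) (hμQ : μ ≪ Q) (hνQ : ν ≪ Q) (hQ : Q ≪ μ + ν)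
    (hμμ : Integrable (Function.uncurry K) (μ.prod μ))
    (hμν : Integrable (Function.uncurry K) (μ.prod ν))
    (hνν : Integrable (Function.uncurry K) (ν.prod ν)) :
    NK K μ ν = -∫ x, ∫ y, K x y * rnDerivDiff μ ν Q x * rnDerivDiff μ ν Q y ∂Q ∂Q := by
  rw [integral_integral_mul_rnDerivDiff_mul_rnDerivDiff hμQ hνQ hQ hμμ hμν
    (integrable_uncurry_prod_comm_of_symm hK hμν) hνν,
    ← integral_integral_comm_of_symm hK hμν, NK]
  ring

end Kernel

theorem NK_eq_zero_implies_eq_general {α : Type*} [MeasurableSpace α] (K : α → α → ℝ)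
    (hKsymm : ∀ x y, K x y = K y x)
    (hKsneg : IsStronglyNegDefKernel K)
    (μ ν : Measure α) [IsProbabilityMeasure μ] [IsProbabilityMeasure ν]
    (hμν : Integrable (Function.uncurry K) (μ.prod ν))
    (hμμ : Integrable (Function.uncurry K) (μ.prod μ))
    (hνν : Integrable (Function.uncurry K) (ν.prod ν))
    (hzero : NK K μ ν = 0) :
    μ = ν := by
  set Q : Measure α := (2 : ℝ≥0∞)⁻¹ • (μ + ν)
  have hQ : Q ≪ μ + ν := Measure.smul_absolutelyContinuous
  have hμQ : μ ≪ Q := (Measure.AbsolutelyContinuous.rfl.add_right ν).smul_right (by simp)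
  have hνQ : ν ≪ Q := (Measure.AbsolutelyContinuous.rfl.add_right' μ).smul_right (by simp)
  have hQprob : IsProbabilityMeasure Q := ⟨by simp [Q, ENNReal.inv_two_add_inv_two]⟩
  refine eq_of_rnDerivDiff_ae_eq_zero hμQ hνQ
    (hKsneg.2 Q hQprob _ integrable_rnDerivDiff ?_ ?_)
  · simp [integral_rnDerivDiff hμQ hνQ]
  · have := NK_eq_neg_integral_integral_mul_rnDerivDiff_mul_rnDerivDiff hKsymm hμQ hνQ hQ
      hμμ hμν hνν
    linarith

/-- For a measurable symmetric strongly negative definite kernel vanishing on the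
diagonal, `N_K(μ,ν) = 0` implies `μ = ν` for probability measures `μ, ν ∈ M_K`. -/
theorem NK_eq_zero_implies_eq {α : Type*} [MeasurableSpace α] (K : α → α → ℝ)
    (hKmeas : Measurable (Function.uncurry K))
    (hKsymm : ∀ x y, K x y = K y x)
    (hKdiag : ∀ x, K x x = 0)
    (hKsneg : IsStronglyNegDefKernel K)
    (μ ν : Measure α) [IsProbabilityMeasure μ] [IsProbabilityMeasure ν]
    (hμν : Integrable (Function.uncurry K) (μ.prod ν))
    (hμμ : Integrable (Function.uncurry K) (μ.prod μ))
    (hνν : Integrable (Function.uncurry K) (ν.prod ν))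
    (hzero : NK K μ ν = 0) :
    μ = ν :=
  NK_eq_zero_implies_eq_general K hKsymm hKsneg μ ν hμν hμμ hνν hzero
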